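/- arXiv:math-ph/0505036 — 2 statements merged into one kernel-verified Lean document; each statement's English description precedes it below -/
import Mathlib

section
/- Fix an integer d ≥ 2 and K > 0, and let ψ_K(η) = η^{1−1/d} + D(K)(1−η)² on [0,1], where D(K) = (2/(dχS))·(σ_d/d)^{−1/d}·(K/2)^{(d+1)/d}. Then: (i) K < K_star if and only if D(K) < C_star; (ii) if K < K_star, the infimum of ψ_K over [0,1] is attained uniquely at η = 0; (iii) if K > K_star, the infimum of ψ_K over [0,1] is attained uniquely at some η_c ∈ (0,1], and this η_c satisfies η_c ≥ η_star = 2/(d+1). -/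
/-
Since `ψ(η) - ψ(0) = η^{1-1/d} (1 - D η^{1/d} (2 - η))`, everything hinges on the maximum of
`η^{1/d} (2 - η)`. The tangent-line (Bernoulli) bound for the concave power `t^{1/d}` shows that
this maximum is attained at `η_* = 2/(d+1)`, with value `1/C_*`. For `D < C_*` the bracket is
positive on `(0, 2]`, so `0` is the strict minimizer. For `D > C_*` we get `ψ(η_*) < ψ(0)`, and
Bernoulli again shows that `ψ` decreases into `η = 1`, so every minimizer `c` is an interior
critical point: `1 - 1/d = 2 D c^{1/d} (1 - c)`. Combined with `ψ(c) ≤ ψ(0)` this forces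
`c ≥ η_*`, and `c^{1/d} (1 - c)` is strictly decreasing on `[1/(d+1), 1]`, so the minimizer is
unique. Finally `D` is increasing in `K` with `D(K_*) = C_*`.
-/

open MeasureTheory Filter

noncomputable section

/-- The double-well potential `F(m) = (1/4)(m²-1)²`. -/
def Fpot (m : ℝ) : ℝ := (1/4) * (m^2 - 1)^2

/-- The fundamental domain `[0,L)^d` of the torus of side `L`. -/
def box (d : ℕ) (L : ℝ) : Set (EuclideanSpace ℝ (Fin d)) :=
  {x | ∀ i, x i ∈ Set.Ico (0:ℝ) L}

/-- `L`-periodicity in each coordinate direction. -/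
def PeriodicOn (d : ℕ) (L : ℝ) (m : EuclideanSpace ℝ (Fin d) → ℝ) : Prop :=
  ∀ (x : EuclideanSpace ℝ (Fin d)) (i : Fin d),
    m (x + L • EuclideanSpace.single i (1:ℝ)) = m x

/-- The Cahn--Hilliard free energy functional on the torus. -/
def FE (d : ℕ) (L : ℝ) (m : EuclideanSpace ℝ (Fin d) → ℝ) : ℝ :=
  ∫ x in box d L, ((1/2) * ‖fderiv ℝ m x‖^2 + Fpot (m x))

/-- Admissible order parameter fields with mean `n`. -/
def Adm (d : ℕ) (L n : ℝ) (m : EuclideanSpace ℝ (Fin d) → ℝ) : Prop :=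
  ContDiff ℝ 1 m ∧ PeriodicOn d L m ∧ (1/L^d) * (∫ x in box d L, m x) = n

/-- The minimal free energy `f_L(n)`. -/
def fL (d : ℕ) (L n : ℝ) : ℝ :=
  sInf {e | ∃ m, Adm d L n m ∧ FE d L m = e}

/-- A minimizer for `f_L(n)`. -/
def IsMinimizer (d : ℕ) (L n : ℝ) (m : EuclideanSpace ℝ (Fin d) → ℝ) : Prop :=
  Adm d L n m ∧ FE d L m = fL d L n

/-- `σ_d`, the surface measure of the unit sphere in `ℝ^d`. -/
def sigma_d (d : ℕ) : ℝ :=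
  d * (volume (Metric.ball (0 : EuclideanSpace ℝ (Fin d)) 1)).toReal

/-- The planar surface tension `S = 2^{3/2}/3`. -/
def Sconst : ℝ := (2:ℝ) ^ ((3:ℝ)/2) / 3

/-- The compressibility `χ = 1/2`. -/
def chiConst : ℝ := 1/2

/-- The equimolar radius `r_0`. -/
def r0 (d : ℕ) (L n : ℝ) : ℝ := ((d / (2 * sigma_d d)) * (n+1)) ^ ((1:ℝ)/d) * L

/-- `|Γ_0| = σ_d r_0^{d-1}`. -/
def Gamma0 (d : ℕ) (L n : ℝ) : ℝ := sigma_d d * (r0 d L n)^(d-1)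

/-- `C(n)`. -/
def Cn (d : ℕ) (L n : ℝ) : ℝ :=
  (sigma_d d / (2 * chiConst * Sconst)) * (2/(d:ℝ))^2 * ((r0 d L n)^(d+1) / L^d)

/-- `D(K)`. -/
def Dconst (d : ℕ) (K : ℝ) : ℝ :=
  (2 / (d * chiConst * Sconst)) * (sigma_d d / d) ^ (-(1:ℝ)/d) * (K/2) ^ (((d:ℝ)+1)/d)

/-- `K_star`. -/
def Kstar (d : ℕ) : ℝ :=
  ((d:ℝ)+1) * (sigma_d d / d) ^ ((1:ℝ)/((d:ℝ)+1)) * (chiConst * Sconst / 2) ^ ((d:ℝ)/((d:ℝ)+1))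

/-- Torus distance. -/
def torusDist (d : ℕ) (L : ℝ) (x y : EuclideanSpace ℝ (Fin d)) : ℝ :=
  ⨅ k : Fin d → ℤ, dist x (y + (show EuclideanSpace ℝ (Fin d) from WithLp.toLp 2 (fun i => L * (k i : ℝ))))

/-- `C_star = (1/d)((d+1)/2)^{(d+1)/d}`. -/
def Cstar (d : ℕ) : ℝ := (1/(d:ℝ)) * (((d:ℝ)+1)/2) ^ (((d:ℝ)+1)/(d:ℝ))

/-- `η_star = 2/(d+1)`. -/
def etaStar (d : ℕ) : ℝ := 2/((d:ℝ)+1)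

/-- `ψ_K(η) = η^{1-1/d} + D(K)(1-η)²`. -/
def psiK (d : ℕ) (K η : ℝ) : ℝ := η ^ (1 - 1/(d:ℝ)) + Dconst d K * (1-η)^2

open Real Set

section TangentBounds

variable {n : ℝ}

theorem rpow_one_div_le_tangent (hn : 1 ≤ n) {a b : ℝ} (ha : 0 < a) (hb : 0 ≤ b) :
    b ^ (1 / n) ≤ a ^ (1 / n) * (1 + (b - a) / (n * a)) := by
  have hn0 : 0 < n := by linarith
  have hbern : (1 + (b / a - 1)) ^ (1 / n) ≤ 1 + 1 / n * (b / a - 1) :=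
    rpow_one_add_le_one_add_mul_self (by linarith [div_nonneg hb ha.le]) (by positivity)
      (div_le_one_of_le₀ hn hn0.le)
  calc b ^ (1 / n) = a ^ (1 / n) * (1 + (b / a - 1)) ^ (1 / n) := by
        rw [← mul_rpow ha.le (by linarith [div_nonneg hb ha.le])]
        congr 1
        field_simp
        ring
    _ ≤ a ^ (1 / n) * (1 + 1 / n * (b / a - 1)) := by gcongr
    _ = a ^ (1 / n) * (1 + (b - a) / (n * a)) := by
        congr 1
        field_simp

theorem rpow_one_div_mul_two_sub_le (hn : 1 ≤ n) {t : ℝ} (ht : 0 ≤ t) (ht2 : t ≤ 2) :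
    t ^ (1 / n) * (2 - t) ≤ (2 / (n + 1)) ^ (1 / n) * (2 - 2 / (n + 1)) := by
  set η := 2 / (n + 1) with hη
  have hη0 : 0 < η := by positivity
  have hnη : n * η = 2 - η := by rw [hη]; field_simp; ring
  have hη2 : 0 < 2 - η := by rw [← hnη]; positivity
  calc t ^ (1 / n) * (2 - t) ≤ η ^ (1 / n) * (1 + (t - η) / (n * η)) * (2 - t) :=
        mul_le_mul_of_nonneg_right (rpow_one_div_le_tangent hn hη0 ht) (by linarith)
    _ = η ^ (1 / n) * ((2 - η) - (t - η) ^ 2 / (2 - η)) := by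
        rw [hnη]
        field_simp
        ring
    _ ≤ η ^ (1 / n) * (2 - η) := by
        have := div_nonneg (sq_nonneg (t - η)) hη2.le
        exact mul_le_mul_of_nonneg_left (by linarith) (by positivity)

theorem strictAntiOn_rpow_one_div_mul_one_sub (hn : 1 ≤ n) :
    StrictAntiOn (fun c : ℝ => c ^ (1 / n) * (1 - c)) (Icc (1 / (n + 1)) 1) := by
  intro a ha b hb hab
  have hn0 : 0 < n := by linarith
  have ha0 : 0 < a := lt_of_lt_of_le (by positivity) ha.1
  have hna : 1 - a ≤ n * a := by
    have : 1 ≤ (n + 1) * a := (div_le_iff₀' (by positivity)).1 ha.1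
    linarith
  calc b ^ (1 / n) * (1 - b) ≤ a ^ (1 / n) * (1 + (b - a) / (n * a)) * (1 - b) :=
        mul_le_mul_of_nonneg_right (rpow_one_div_le_tangent hn ha0 (by linarith))
          (by linarith [hb.2])
    _ = a ^ (1 / n) * ((1 - a) - (b - a) * (n * a - (1 - b)) / (n * a)) := by
        field_simp
        ring
    _ < a ^ (1 / n) * (1 - a) := by
        have : 0 < (b - a) * (n * a - (1 - b)) / (n * a) := by
          apply div_pos (mul_pos (by linarith) (by linarith)) (by positivity)
        exact mul_lt_mul_of_pos_left (by linarith) (rpow_pos_of_pos ha0 _)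

end TangentBounds

/-- `psiK d K` is definitionally `psi d (Dconst d K)`. -/
def psi (n D η : ℝ) : ℝ := η ^ (1 - 1 / n) + D * (1 - η) ^ 2

/-- The real-exponent version of `Cstar`: the reciprocal of the maximum of `t ^ (1/n) * (2 - t)`
on `[0, 2]`, attained at `t = 2 / (n + 1)`. -/
def Dcrit (n : ℝ) : ℝ := ((2 / (n + 1)) ^ (1 / n) * (2 - 2 / (n + 1)))⁻¹

section Psi

variable {n D : ℝ}

theorem Dcrit_pos (hn : 0 < n) : 0 < Dcrit n := by
  have hη : 2 / (n + 1) < 2 := (div_lt_iff₀ (by positivity)).2 (by linarith)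
  have hpow := rpow_pos_of_pos (by positivity : (0 : ℝ) < 2 / (n + 1)) (1 / n)
  rw [Dcrit, inv_pos]
  exact mul_pos hpow (by linarith)

theorem inv_Dcrit (n : ℝ) : (Dcrit n)⁻¹ = (2 / (n + 1)) ^ (1 / n) * (2 - 2 / (n + 1)) :=
  inv_inv _

theorem psi_zero (hn : 1 < n) : psi n D 0 = D := by
  have : 1 / n < 1 := (div_lt_one (by linarith)).2 hn
  rw [psi, zero_rpow (by linarith)]
  ring

theorem psi_sub_psi_zero (hn : 1 < n) {t : ℝ} (ht : 0 < t) :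
    psi n D t - psi n D 0 = t ^ (1 - 1 / n) * (1 - D * (t ^ (1 / n) * (2 - t))) := by
  have hsplit : t ^ (1 - 1 / n) * t ^ (1 / n) = t := by
    rw [← rpow_add ht, sub_add_cancel, rpow_one]
  rw [psi_zero hn, psi]
  linear_combination (D * (2 - t)) * hsplit

theorem psi_zero_lt_psi (hn : 1 < n) (hD0 : 0 ≤ D) (hD : D < Dcrit n) {t : ℝ} (ht : 0 < t)
    (ht2 : t ≤ 2) : psi n D 0 < psi n D t := by
  have hbound : D * (t ^ (1 / n) * (2 - t)) < 1 :=
    calc D * (t ^ (1 / n) * (2 - t)) ≤ D * (Dcrit n)⁻¹ := by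
          rw [inv_Dcrit]
          exact mul_le_mul_of_nonneg_left (rpow_one_div_mul_two_sub_le hn.le ht.le ht2) hD0
      _ < 1 := by rwa [← div_eq_mul_inv, div_lt_one (Dcrit_pos (by linarith))]
  have := psi_sub_psi_zero (D := D) hn ht
  nlinarith [rpow_pos_of_pos ht (1 - 1 / n)]

theorem psi_two_div_lt_psi_zero (hn : 1 < n) (hD : Dcrit n < D) :
    psi n D (2 / (n + 1)) < psi n D 0 := by
  have hη : 0 < 2 / (n + 1) := by positivity
  have hbound : 1 < D * ((2 / (n + 1)) ^ (1 / n) * (2 - 2 / (n + 1))) := by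
    rwa [← inv_Dcrit, ← div_eq_mul_inv, one_lt_div (Dcrit_pos (by linarith))]
  have := psi_sub_psi_zero (D := D) hn hη
  nlinarith [rpow_pos_of_pos hη (1 - 1 / n)]

theorem continuous_psi (hn : 1 ≤ n) : Continuous (psi n D) := by
  have : 0 ≤ 1 - 1 / n := by
    have : 1 / n ≤ 1 := div_le_one_of_le₀ hn (by linarith)
    linarith
  unfold psi
  fun_prop (disch := assumption)

theorem hasDerivAt_psi {x : ℝ} (hx : x ≠ 0) :
    HasDerivAt (psi n D) ((1 - 1 / n) * x ^ (-(1 / n)) - 2 * D * (1 - x)) x := by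
  have h : HasDerivAt (psi n D) _ x := (hasDerivAt_rpow_const (p := 1 - 1 / n) (Or.inl hx)).add
    ((((hasDerivAt_id' x).const_sub 1).pow 2).const_mul D)
  refine h.congr_deriv ?_
  rw [sub_sub_cancel_left]
  push_cast
  ring

/-- Bernoulli's inequality `(1 - ε) ^ α ≤ 1 - α ε` beats the quadratic term for small `ε`. -/
theorem exists_psi_lt_psi_one (hn : 1 < n) (hD : 0 ≤ D) :
    ∃ η ∈ Ico 0 1, psi n D η < psi n D 1 := by
  set α := 1 - 1 / n with hαdef
  have hn' : 0 < 1 / n := by positivity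
  have hn1 : 1 / n < 1 := (div_lt_one (by linarith)).2 hn
  have hα : 0 < α := by linarith
  have hα1 : α ≤ 1 := by linarith
  set ε := α / (α + D)
  have hε : 0 < ε := by positivity
  have hε1 : ε ≤ 1 := (div_le_one (by positivity)).2 (by linarith)
  have hbern : (1 - ε) ^ α ≤ 1 - α * ε := by
    have := rpow_one_add_le_one_add_mul_self (s := -ε) (by linarith) hα.le hα1
    rwa [← sub_eq_add_neg, mul_neg, ← sub_eq_add_neg] at this
  refine ⟨1 - ε, ⟨by linarith, by linarith⟩, ?_⟩
  have hgap : D * ε < α := by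
    rw [mul_div_assoc', div_lt_iff₀ (by positivity)]
    nlinarith
  calc psi n D (1 - ε) ≤ 1 - ε * (α - D * ε) := by
        rw [psi, sub_sub_cancel]
        linear_combination hbern
    _ < 1 := by nlinarith
    _ = psi n D 1 := by simp [psi]

end Psi

section Minimizer

variable {n D : ℝ}

theorem IsLocalMin.psi_critical {c : ℝ} (h : IsLocalMin (psi n D) c) (hc : 0 < c) :
    1 - 1 / n = 2 * D * (c ^ (1 / n) * (1 - c)) := by
  have h0 := h.hasDerivAt_eq_zero (hasDerivAt_psi hc.ne')
  have hinv : c ^ (-(1 / n)) * c ^ (1 / n) = 1 := by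
    rw [rpow_neg hc.le, inv_mul_cancel₀ (rpow_pos_of_pos hc _).ne']
  linear_combination c ^ (1 / n) * h0 - (1 - 1 / n) * hinv

theorem IsMinOn.psi_critical_of_Dcrit_lt (hn : 1 < n) (hD : Dcrit n < D) {c : ℝ}
    (hc : c ∈ Icc 0 1) (hmin : IsMinOn (psi n D) (Icc 0 1) c) :
    c ∈ Ioo 0 1 ∧ 2 / (n + 1) ≤ c ∧ 1 - 1 / n = 2 * D * (c ^ (1 / n) * (1 - c)) := by
  have hD0 : 0 < D := (Dcrit_pos (by linarith)).trans hD
  have hc0 : 0 < c := by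
    refine lt_of_le_of_ne hc.1 fun h0 => ?_
    have hη : 2 / (n + 1) ∈ Icc (0 : ℝ) 1 :=
      ⟨by positivity, (div_le_one (by linarith)).2 (by linarith)⟩
    have := hmin hη
    rw [← h0] at this
    exact (psi_two_div_lt_psi_zero hn hD).not_ge this
  have hc1 : c < 1 := by
    refine lt_of_le_of_ne hc.2 fun h1 => ?_
    obtain ⟨η, hη, hlt⟩ := exists_psi_lt_psi_one hn hD0.le
    have := hmin (Ico_subset_Icc_self hη)
    rw [h1] at this
    exact hlt.not_ge this
  have hcrit := (hmin.isLocalMin (Icc_mem_nhds hc0 hc1)).psi_critical hc0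
  refine ⟨⟨hc0, hc1⟩, ?_, hcrit⟩
  have hgain : 1 ≤ D * (c ^ (1 / n) * (2 - c)) := by
    have hle : psi n D c - psi n D 0 ≤ 0 := sub_nonpos.2 (hmin ⟨le_rfl, zero_le_one⟩)
    rw [psi_sub_psi_zero hn hc0] at hle
    nlinarith [rpow_pos_of_pos hc0 (1 - 1 / n)]
  have hn0 : 0 < n := by linarith
  have hα : 0 ≤ 1 - 1 / n := sub_nonneg.2 ((div_le_one hn0).2 hn.le)
  have key : 2 * (1 - c) ≤ (1 - 1 / n) * (2 - c) := by
    refine le_of_mul_le_mul_left ?_ (mul_pos hD0 (rpow_pos_of_pos hc0 (1 / n)))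
    calc D * c ^ (1 / n) * (2 * (1 - c)) = 1 - 1 / n := by rw [hcrit]; ring
      _ ≤ (1 - 1 / n) * (D * (c ^ (1 / n) * (2 - c))) := le_mul_of_one_le_right hα hgain
      _ = D * c ^ (1 / n) * ((1 - 1 / n) * (2 - c)) := by ring
  rw [div_le_iff₀ (by positivity)]
  field_simp at key
  nlinarith

theorem psi_existsUnique_isMinOn (hn : 1 < n) (hD : Dcrit n < D) :
    ∃ c ∈ Ioo 0 1, 2 / (n + 1) ≤ c ∧ IsMinOn (psi n D) (Icc 0 1) c ∧
      ∀ η ∈ Icc 0 1, IsMinOn (psi n D) (Icc 0 1) η → η = c := by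
  obtain ⟨c, hc, hmin⟩ := isCompact_Icc.exists_isMinOn (nonempty_Icc.2 zero_le_one)
    (continuous_psi hn.le).continuousOn
  obtain ⟨hc01, hcη, hccrit⟩ := hmin.psi_critical_of_Dcrit_lt hn hD hc
  refine ⟨c, hc01, hcη, hmin, fun η hη hηmin => ?_⟩
  obtain ⟨hη01, hηη, hηcrit⟩ := hηmin.psi_critical_of_Dcrit_lt hn hD hη
  have hD0 : 2 * D ≠ 0 := mul_ne_zero two_ne_zero ((Dcrit_pos (by linarith)).trans hD).ne'
  have hsub : Icc (2 / (n + 1)) 1 ⊆ Icc (1 / (n + 1)) 1 :=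
    Icc_subset_Icc_left (div_le_div_of_nonneg_right (by norm_num) (by linarith))
  refine (strictAntiOn_rpow_one_div_mul_one_sub hn.le).injOn (hsub ⟨hηη, hη01.2.le⟩)
    (hsub ⟨hcη, hc01.2.le⟩) ?_
  exact mul_left_cancel₀ hD0 (hηcrit.symm.trans hccrit)

end Minimizer

section Constants

variable {d : ℕ}

theorem sigma_d_pos (hd : 0 < d) : 0 < sigma_d d :=
  mul_pos (Nat.cast_pos.2 hd) <| ENNReal.toReal_pos (Metric.measure_ball_pos volume _ one_pos).ne'
    measure_ball_lt_top.ne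

theorem chiConst_mul_Sconst_pos : 0 < chiConst * Sconst := by
  unfold chiConst Sconst
  have := rpow_pos_of_pos (two_pos : (0 : ℝ) < 2) (3 / 2)
  positivity

theorem Kstar_pos (hd : 0 < d) : 0 < Kstar d := by
  have hA := rpow_pos_of_pos (div_pos (sigma_d_pos hd) (Nat.cast_pos.2 hd)) (1 / ((d : ℝ) + 1))
  have hB := rpow_pos_of_pos (half_pos chiConst_mul_Sconst_pos) ((d : ℝ) / ((d : ℝ) + 1))
  unfold Kstar
  positivity

theorem Dconst_strictMonoOn (hd : 0 < d) : StrictMonoOn (Dconst d) (Ici 0) := by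
  intro K hK K' hK' hlt
  have hd' : (0 : ℝ) < d := Nat.cast_pos.2 hd
  have hc : 0 < 2 / (d * chiConst * Sconst) * (sigma_d d / d) ^ (-(1 : ℝ) / d) := by
    have := rpow_pos_of_pos (div_pos (sigma_d_pos hd) hd') (-(1 : ℝ) / d)
    have := chiConst_mul_Sconst_pos
    rw [mul_assoc (d : ℝ)]
    positivity
  refine mul_lt_mul_of_pos_left ?_ hc
  exact rpow_lt_rpow (by linarith [mem_Ici.1 hK]) (by linarith) (by positivity)

theorem Dconst_nonneg (hd : 0 < d) {K : ℝ} (hK : 0 ≤ K) : 0 ≤ Dconst d K := by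
  have h0 : Dconst d 0 = 0 := by
    rw [Dconst, zero_div, zero_rpow (by positivity), mul_zero]
  rcases hK.eq_or_lt with rfl | hK
  · exact h0.ge
  · exact h0 ▸ (Dconst_strictMonoOn hd self_mem_Ici hK.le hK).le

theorem Kstar_half_rpow (hd : 0 < d) :
    (Kstar d / 2) ^ (((d : ℝ) + 1) / d) =
      (((d : ℝ) + 1) / 2) ^ (((d : ℝ) + 1) / d) *
        ((sigma_d d / d) ^ (1 / (d : ℝ)) * (chiConst * Sconst / 2)) := by
  have hn : (0 : ℝ) < d := Nat.cast_pos.2 hd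
  have hA : 0 < sigma_d d / d := div_pos (sigma_d_pos hd) hn
  have hB : 0 < chiConst * Sconst / 2 := half_pos chiConst_mul_Sconst_pos
  have hhalf : Kstar d / 2 = ((d : ℝ) + 1) / 2 * ((sigma_d d / d) ^ (1 / ((d : ℝ) + 1)) *
      (chiConst * Sconst / 2) ^ ((d : ℝ) / ((d : ℝ) + 1))) := by
    rw [Kstar]; ring
  rw [hhalf, mul_rpow (by positivity) (by positivity),
    mul_rpow (by positivity) (by positivity), ← rpow_mul hA.le, ← rpow_mul hB.le,
    show 1 / ((d : ℝ) + 1) * (((d : ℝ) + 1) / d) = 1 / d by field_simp,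
    show (d : ℝ) / ((d : ℝ) + 1) * (((d : ℝ) + 1) / d) = 1 by field_simp, rpow_one]

theorem Dconst_Kstar (hd : 0 < d) : Dconst d (Kstar d) = Cstar d := by
  have hn : (0 : ℝ) < d := Nat.cast_pos.2 hd
  have hA : 0 < sigma_d d / d := div_pos (sigma_d_pos hd) hn
  have hB : 0 < chiConst * Sconst := chiConst_mul_Sconst_pos
  have hcancel : (sigma_d d / d) ^ (-(1 : ℝ) / d) * (sigma_d d / d) ^ (1 / (d : ℝ)) = 1 := by
    rw [← rpow_add hA, neg_div, neg_add_cancel, rpow_zero]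
  have hk : 2 / (d * chiConst * Sconst) * (chiConst * Sconst / 2) = 1 / (d : ℝ) := by
    rw [mul_assoc (d : ℝ)]
    field_simp
    exact div_self hB.ne'
  rw [Dconst, Kstar_half_rpow hd, Cstar]
  set X := (((d : ℝ) + 1) / 2) ^ (((d : ℝ) + 1) / d)
  linear_combination (2 / (d * chiConst * Sconst) * (chiConst * Sconst / 2) * X) * hcancel + X * hk

theorem Cstar_eq_Dcrit (hd : 0 < d) : Cstar d = Dcrit d := by
  have hn : (0 : ℝ) < d := Nat.cast_pos.2 hd
  have hx : (0 : ℝ) < ((d : ℝ) + 1) / 2 := by positivity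
  have hsplit : (((d : ℝ) + 1) / 2) ^ (((d : ℝ) + 1) / d) =
      (((d : ℝ) + 1) / 2) ^ (1 / (d : ℝ)) * (((d : ℝ) + 1) / 2) := by
    rw [← rpow_add_one hx.ne', div_add_one hn.ne', add_comm (1 : ℝ)]
  have hinv :
      (2 / ((d : ℝ) + 1)) ^ (1 / (d : ℝ)) = ((((d : ℝ) + 1) / 2) ^ (1 / (d : ℝ)))⁻¹ := by
    rw [← inv_rpow hx.le, inv_div]
  have hxp := rpow_pos_of_pos hx (1 / (d : ℝ))
  have hgap : 2 - 2 / ((d : ℝ) + 1) = d / (((d : ℝ) + 1) / 2) := by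
    field_simp
    ring
  rw [Dcrit, Cstar, hsplit, hinv, hgap]
  field_simp

end Constants

/-- Minimization of the phenomenological free energy: (i) `K < K_star ↔ D(K) < C_star`;
(ii) if `K < K_star` the infimum of `ψ_K` on `[0,1]` is uniquely attained at `η = 0`;
(iii) if `K > K_star` it is uniquely attained at some `η_c ∈ (0,1]` with `η_c ≥ η_star`. -/
theorem psiK_minimization (d : ℕ) (hd : 2 ≤ d) (K : ℝ) (hK : 0 < K) :
    (K < Kstar d ↔ Dconst d K < Cstar d) ∧
    (K < Kstar d → ∀ η ∈ Set.Icc (0:ℝ) 1, η ≠ 0 → psiK d K 0 < psiK d K η) ∧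
    (Kstar d < K → ∃ ηc ∈ Set.Ioc (0:ℝ) 1, etaStar d ≤ ηc ∧
      (∀ η ∈ Set.Icc (0:ℝ) 1, psiK d K ηc ≤ psiK d K η) ∧
      (∀ η ∈ Set.Icc (0:ℝ) 1, psiK d K η = psiK d K ηc → η = ηc)) := by
  have hd0 : 0 < d := by omega
  have hn : (1 : ℝ) < d := by exact_mod_cast hd
  have hthreshold : Dconst d K < Cstar d ↔ K < Kstar d := by
    rw [← Dconst_Kstar hd0]
    exact (Dconst_strictMonoOn hd0).lt_iff_lt hK.le (Kstar_pos hd0).le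
  rw [Cstar_eq_Dcrit hd0] at hthreshold ⊢
  refine ⟨hthreshold.symm, fun hlt η hη hη0 => ?_, fun hgt => ?_⟩
  · exact psi_zero_lt_psi hn (Dconst_nonneg hd0 hK.le) (hthreshold.2 hlt)
      (lt_of_le_of_ne hη.1 (Ne.symm hη0)) (by linarith [hη.2])
  · have hD : Dcrit d < Dconst d K := by
      rw [← Cstar_eq_Dcrit hd0, ← Dconst_Kstar hd0]
      exact Dconst_strictMonoOn hd0 (Kstar_pos hd0).le hK.le hgt
    obtain ⟨c, hc, hcη, hmin, huniq⟩ := psi_existsUnique_isMinOn hn hD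
    exact ⟨c, Ioo_subset_Ioc_self hc, hcη, fun η hη => hmin hη,
      fun η hη heq => huniq η hη fun x hx => heq.trans_le (hmin hx)⟩
end
end

section
/- Let m be a C² function on the torus Ω satisfying the Euler–Lagrange equation −Δm(x) + m(x)³ − m(x) + μ = 0 for all x ∈ Ω, for some constant μ ∈ ℝ. Define λ = (max_Ω m) − 1 and ν = (min_Ω m) + 1. Then ν ≥ λ. Consequently, if in addition (1/L^d)∫_Ω m dx = −1 + δ for some δ > 0, then δ ≥ ν ≥ λ; in particular max_Ω m ≤ 1 + δ. -/
open MeasureTheory Filter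

noncomputable section

/-- The Laplacian on `ℝ^d`, as the sum of second partial derivatives. -/
def lap (d : ℕ) (m : EuclideanSpace ℝ (Fin d) → ℝ) (x : EuclideanSpace ℝ (Fin d)) : ℝ :=
  ∑ i : Fin d, fderiv ℝ (fun y => fderiv ℝ m y (EuclideanSpace.single i (1:ℝ))) x
    (EuclideanSpace.single i (1:ℝ))

/-!
At a maximum point of `m` every second directional derivative is `≤ 0`: the restriction to a line
has a local maximum there, and if its second derivative were positive, the second-derivative test
would make it a local minimum as well, hence locally constant, with second derivative `0`. So
`Δm ≤ 0` at a maximum point, and likewise `Δm ≥ 0` at a minimum point.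
Periodicity and compactness of the closed cube provide these extremal points. The Euler–Lagrange
equation then gives `M³ - M ≤ -μ ≤ m₀³ - m₀` for `M = max m` and `m₀ = min m`, which forces
`M ≤ m₀ + 2` because `a² + ab + b² ≥ 3(a - b)²/4`. Finally the minimum is at most the mean `-1 + δ`.
-/

open Set Topology

theorem IsLocalMin.deriv_deriv_eq_zero_of_isLocalMax {f : ℝ → ℝ} {x₀ : ℝ}
    (hmin : IsLocalMin f x₀) (hmax : IsLocalMax f x₀) : deriv (deriv f) x₀ = 0 := by
  have hconst : f =ᶠ[𝓝 x₀] fun _ => f x₀ :=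
    (hmin.and hmax).mono fun _ hx => le_antisymm hx.2 hx.1
  rw [hconst.deriv.deriv_eq]
  simp

theorem IsLocalMax.deriv_deriv_nonpos {f : ℝ → ℝ} {x₀ : ℝ} (h : IsLocalMax f x₀)
    (hc : ContinuousAt f x₀) : deriv (deriv f) x₀ ≤ 0 := by
  by_contra! hpos
  have hzero := (isLocalMin_of_deriv_deriv_pos hpos h.deriv_eq_zero hc
    ).deriv_deriv_eq_zero_of_isLocalMax h
  linarith

theorem IsLocalMin.deriv_deriv_nonneg {f : ℝ → ℝ} {x₀ : ℝ} (h : IsLocalMin f x₀)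
    (hc : ContinuousAt f x₀) : 0 ≤ deriv (deriv f) x₀ := by
  by_contra! hneg
  have hzero := h.deriv_deriv_eq_zero_of_isLocalMax
    (isLocalMax_of_deriv_deriv_neg hneg h.deriv_eq_zero hc)
  linarith

section SecondDirectionalDerivative

variable {E : Type*} [NormedAddCommGroup E] [NormedSpace ℝ E] {m : E → ℝ} {x v : E}

theorem deriv_deriv_comp_line (hm : Differentiable ℝ m)
    (hmv : DifferentiableAt ℝ (fun y => fderiv ℝ m y v) x) :
    deriv (deriv fun t : ℝ => m (x + t • v)) 0 = fderiv ℝ (fun y => fderiv ℝ m y v) x v := by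
  have hline : ∀ t : ℝ, HasDerivAt (fun s : ℝ => x + s • v) v t := fun t => by
    simpa using ((hasDerivAt_id t).smul_const v).const_add x
  have hderiv : deriv (fun t : ℝ => m (x + t • v)) = fun t => fderiv ℝ m (x + t • v) v :=
    funext fun t => ((hm _).hasFDerivAt.comp_hasDerivAt t (hline t)).deriv
  rw [hderiv]
  exact ((by simpa using hmv.hasFDerivAt :
    HasFDerivAt (fun y => fderiv ℝ m y v) _ (x + (0 : ℝ) • v)).comp_hasDerivAt 0 (hline 0)).deriv

theorem IsLocalMax.fderiv_fderiv_apply_nonpos (h : IsLocalMax m x) (hm : Differentiable ℝ m)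
    (hmv : DifferentiableAt ℝ (fun y => fderiv ℝ m y v) x) :
    fderiv ℝ (fun y => fderiv ℝ m y v) x v ≤ 0 := by
  have hline : IsLocalMax (fun t : ℝ => m (x + t • v)) 0 :=
    IsLocalMax.comp_continuous (g := fun t : ℝ => x + t • v) (b := 0) (by simpa using h)
      (by fun_prop)
  rw [← deriv_deriv_comp_line hm hmv]
  exact hline.deriv_deriv_nonpos (hm.continuous.comp (by fun_prop)).continuousAt

theorem IsLocalMin.fderiv_fderiv_apply_nonneg (h : IsLocalMin m x) (hm : Differentiable ℝ m)
    (hmv : DifferentiableAt ℝ (fun y => fderiv ℝ m y v) x) :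
    0 ≤ fderiv ℝ (fun y => fderiv ℝ m y v) x v := by
  have hline : IsLocalMin (fun t : ℝ => m (x + t • v)) 0 :=
    IsLocalMin.comp_continuous (g := fun t : ℝ => x + t • v) (b := 0) (by simpa using h)
      (by fun_prop)
  rw [← deriv_deriv_comp_line hm hmv]
  exact hline.deriv_deriv_nonneg (hm.continuous.comp (by fun_prop)).continuousAt

theorem ContDiff.differentiableAt_fderiv_apply (hm : ContDiff ℝ 2 m) (x v : E) :
    DifferentiableAt ℝ (fun y => fderiv ℝ m y v) x :=
  ((hm.fderiv_right (m := 1) (by norm_num)).clm_apply contDiff_const).differentiable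
    one_ne_zero x

end SecondDirectionalDerivative

section Laplacian

variable {d : ℕ} {m : EuclideanSpace ℝ (Fin d) → ℝ} {x : EuclideanSpace ℝ (Fin d)}

theorem IsLocalMax.lap_nonpos (h : IsLocalMax m x) (hm : ContDiff ℝ 2 m) : lap d m x ≤ 0 :=
  Finset.sum_nonpos fun _ _ => h.fderiv_fderiv_apply_nonpos (hm.differentiable two_ne_zero)
    (hm.differentiableAt_fderiv_apply _ _)

theorem IsLocalMin.lap_nonneg (h : IsLocalMin m x) (hm : ContDiff ℝ 2 m) : 0 ≤ lap d m x :=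
  Finset.sum_nonneg fun _ _ => h.fderiv_fderiv_apply_nonneg (hm.differentiable two_ne_zero)
    (hm.differentiableAt_fderiv_apply _ _)

end Laplacian

theorem le_add_two_of_cube_sub_le {a b : ℝ} (h : a ^ 3 - a ≤ b ^ 3 - b) : a ≤ b + 2 := by
  nlinarith [sq_nonneg (a - b), sq_nonneg (a + b)]

section Torus

variable {d : ℕ} {L : ℝ} {m : EuclideanSpace ℝ (Fin d) → ℝ}

theorem PeriodicOn.neg (hper : PeriodicOn d L m) : PeriodicOn d L (-m) :=
  fun x i => by simp [hper x i]

theorem PeriodicOn.apply_add_int_mul_smul (hper : PeriodicOn d L m)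
    (x : EuclideanSpace ℝ (Fin d)) (i : Fin d) (k : ℤ) :
    m (x + ((k : ℝ) * L) • EuclideanSpace.single i 1) = m x := by
  have hper_i : Function.Periodic (fun t : ℝ => m (x + t • EuclideanSpace.single i 1)) L :=
    fun t => by simpa only [add_smul, ← add_assoc] using hper (x + t • _) i
  simpa using hper_i.int_mul k 0

theorem PeriodicOn.apply_add_sum (hper : PeriodicOn d L m) (x : EuclideanSpace ℝ (Fin d))
    (k : Fin d → ℤ) (s : Finset (Fin d)) :
    m (x + ∑ i ∈ s, ((k i : ℝ) * L) • EuclideanSpace.single i 1) = m x := by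
  induction s using Finset.induction_on with
  | empty => simp
  | insert a s ha ih =>
    rw [Finset.sum_insert ha, ← add_assoc, add_right_comm, hper.apply_add_int_mul_smul, ih]

theorem PeriodicOn.image_box_eq_range (hper : PeriodicOn d L m) (hL : 0 < L) :
    m '' box d L = range m := by
  refine (image_subset_range _ _).antisymm ?_
  rintro _ ⟨y, rfl⟩
  let k : Fin d → ℤ := fun i => toIcoDiv hL 0 (y i)
  refine ⟨y - ∑ i, ((k i : ℝ) * L) • EuclideanSpace.single i 1, fun i => ?_, ?_⟩
  · have hi : (y - ∑ j, ((k j : ℝ) * L) • EuclideanSpace.single j 1 :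
        EuclideanSpace ℝ (Fin d)) i = toIcoMod hL 0 (y i) := by
      rw [← self_sub_toIcoDiv_zsmul]
      simp [Pi.single_apply, k]
    exact hi ▸ toIcoMod_mem_Ico' hL (y i)
  · rw [← hper.apply_add_sum _ k .univ, sub_add_cancel]

theorem exists_isCompact_superset_box (d : ℕ) (L : ℝ) : ∃ K, IsCompact K ∧ box d L ⊆ K :=
  ⟨EuclideanSpace.equiv (Fin d) ℝ ⁻¹' univ.pi fun _ => Icc 0 L,
    (EuclideanSpace.equiv (Fin d) ℝ).toHomeomorph.isCompact_preimage.2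
      (isCompact_univ_pi fun _ => isCompact_Icc),
    fun _ hx i _ => Ico_subset_Icc_self (hx i)⟩

theorem PeriodicOn.exists_forall_le (hper : PeriodicOn d L m) (hL : 0 < L) (hm : Continuous m) :
    ∃ x, ∀ y, m y ≤ m x := by
  obtain ⟨K, hK, hboxK⟩ := exists_isCompact_superset_box d L
  have hbox : (box d L).Nonempty := ⟨0, fun _ => by simp [hL]⟩
  obtain ⟨x, -, hx⟩ := hK.exists_isMaxOn (hbox.mono hboxK) hm.continuousOn
  refine ⟨x, fun y => ?_⟩
  obtain ⟨z, hz, hzy⟩ : m y ∈ m '' box d L := hper.image_box_eq_range hL ▸ mem_range_self y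
  exact hzy ▸ hx (hboxK hz)

theorem PeriodicOn.exists_forall_ge (hper : PeriodicOn d L m) (hL : 0 < L) (hm : Continuous m) :
    ∃ x, ∀ y, m x ≤ m y := by
  obtain ⟨x, hx⟩ := hper.neg.exists_forall_le hL hm.neg
  exact ⟨x, fun y => neg_le_neg_iff.1 (hx y)⟩

end Torus

theorem box_eq_preimage_pi (d : ℕ) (L : ℝ) :
    box d L = (MeasurableEquiv.toLp 2 (Fin d → ℝ)).symm ⁻¹' univ.pi fun _ => Ico 0 L := by
  ext x
  simp [box, Set.mem_pi]

theorem measurableSet_box (d : ℕ) (L : ℝ) : MeasurableSet (box d L) := by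
  rw [box_eq_preimage_pi]
  exact (MeasurableEquiv.measurable _) (.univ_pi fun _ => measurableSet_Ico)

theorem volume_box (d : ℕ) (L : ℝ) : volume (box d L) = ENNReal.ofReal L ^ d := by
  rw [box_eq_preimage_pi,
    (EuclideanSpace.volume_preserving_symm_measurableEquiv_toLp (Fin d)).measure_preimage
      (MeasurableSet.univ_pi fun _ => measurableSet_Ico).nullMeasurableSet]
  simp [volume_pi_pi]

theorem le_mean_box {d : ℕ} {L c : ℝ} {m : EuclideanSpace ℝ (Fin d) → ℝ} (hL : 0 < L)
    (hm : Continuous m) (hc : ∀ x ∈ box d L, c ≤ m x) :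
    c ≤ 1 / L ^ d * ∫ x in box d L, m x := by
  obtain ⟨K, hK, hboxK⟩ := exists_isCompact_superset_box d L
  have hint : IntegrableOn m (box d L) := (hm.continuousOn.integrableOn_compact hK).mono_set hboxK
  have hvol : volume (box d L) ≠ ⊤ := by simp [volume_box]
  have hmul := setIntegral_ge_of_const_le_real (measurableSet_box d L) hvol hc hint
  rw [measureReal_def, volume_box, ENNReal.toReal_pow, ENNReal.toReal_ofReal hL.le] at hmul
  rw [one_div, le_inv_mul_iff₀ (by positivity)]
  linarith

theorem EL_max_principle_general (d : ℕ) (L : ℝ) (hL : 0 < L)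
    (m : EuclideanSpace ℝ (Fin d) → ℝ) (μ : ℝ)
    (hm : ContDiff ℝ 2 m) (hper : PeriodicOn d L m)
    (hEL : ∀ x, -lap d m x + (m x)^3 - m x + μ = 0) :
    sSup (m '' box d L) - 1 ≤ sInf (m '' box d L) + 1 ∧
    ∀ δ : ℝ, 0 < δ → (1/L^d) * (∫ x in box d L, m x) = -1 + δ →
      sInf (m '' box d L) + 1 ≤ δ ∧ sSup (m '' box d L) ≤ 1 + δ := by
  obtain ⟨xM, hxM⟩ := hper.exists_forall_le hL hm.continuous
  obtain ⟨xm, hxm⟩ := hper.exists_forall_ge hL hm.continuous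
  have hSup : sSup (m '' box d L) = m xM := by
    rw [hper.image_box_eq_range hL]
    exact IsGreatest.csSup_eq ⟨mem_range_self xM, forall_mem_range.2 hxM⟩
  have hInf : sInf (m '' box d L) = m xm := by
    rw [hper.image_box_eq_range hL]
    exact IsLeast.csInf_eq ⟨mem_range_self xm, forall_mem_range.2 hxm⟩
  have hlapM : lap d m xM ≤ 0 := IsLocalMax.lap_nonpos (.of_forall hxM) hm
  have hlapm : 0 ≤ lap d m xm := IsLocalMin.lap_nonneg (.of_forall hxm) hm
  have hgap : m xM ≤ m xm + 2 := le_add_two_of_cube_sub_le (by linarith [hEL xM, hEL xm])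
  rw [hSup, hInf]
  refine ⟨by linarith, fun δ _ hmean => ?_⟩
  have hmin_le_mean : m xm ≤ -1 + δ := hmean ▸ le_mean_box hL hm.continuous fun x _ => hxm x
  constructor <;> linarith

/-- Lemma 3.1: for any solution of the Euler--Lagrange equation
`-Δm + m³ - m + μ = 0` on the torus, `ν = min m + 1 ≥ λ = max m - 1`; consequently if
the mean of `m` is `-1 + δ` then `δ ≥ ν ≥ λ`, so `max m ≤ 1 + δ`. -/
theorem EL_max_principle (d : ℕ) (hd : 2 ≤ d) (L : ℝ) (hL : 0 < L)
    (m : EuclideanSpace ℝ (Fin d) → ℝ) (μ : ℝ)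
    (hm : ContDiff ℝ 2 m) (hper : PeriodicOn d L m)
    (hEL : ∀ x, -lap d m x + (m x)^3 - m x + μ = 0) :
    sSup (m '' box d L) - 1 ≤ sInf (m '' box d L) + 1 ∧
    ∀ δ : ℝ, 0 < δ → (1/L^d) * (∫ x in box d L, m x) = -1 + δ →
      sInf (m '' box d L) + 1 ≤ δ ∧ sSup (m '' box d L) ≤ 1 + δ :=
  EL_max_principle_general d L hL m μ hm hper hEL

end
end
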